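/- Fueter-type statement for powers: for every m ≥ 2, the function x ↦ Δ(x^m) (four-dimensional Laplacian of the slice regular power, computed componentwise on ℍ ≅ ℝ⁴) satisfies the Cauchy–Riemann–Fueter equation ∂̄(Δ(x^m)) = 0 on ℍ. -/

import Mathlib

open Quaternion

noncomputable section

/-- Directional derivative of `f : ℍ → ℍ` along `v`. -/
def pderivQ (v : Quaternion ℝ) (f : Quaternion ℝ → Quaternion ℝ) :
    Quaternion ℝ → Quaternion ℝ :=
  fun x => fderiv ℝ f x v

def qI : Quaternion ℝ := ⟨0, 1, 0, 0⟩
def qJ : Quaternion ℝ := ⟨0, 0, 1, 0⟩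
def qK : Quaternion ℝ := ⟨0, 0, 0, 1⟩

/-- The Cauchy–Riemann–Fueter operator `∂̄ = (1/2)(∂_α + i ∂_β + j ∂_γ + k ∂_δ)`. -/
def CRFbar (f : Quaternion ℝ → Quaternion ℝ) : Quaternion ℝ → Quaternion ℝ :=
  fun x => (2 : ℝ)⁻¹ •
    (pderivQ 1 f x + qI * pderivQ qI f x + qJ * pderivQ qJ f x + qK * pderivQ qK f x)

/-- The four-dimensional Laplacian, acting componentwise on `ℍ ≅ ℝ⁴`-valued functions. -/
def laplacianQ (f : Quaternion ℝ → Quaternion ℝ) : Quaternion ℝ → Quaternion ℝ :=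
  fun x => pderivQ 1 (pderivQ 1 f) x + pderivQ qI (pderivQ qI f) x +
    pderivQ qJ (pderivQ qJ f) x + pderivQ qK (pderivQ qK f) x

open Finset ContinuousLinearMap

set_option maxHeartbeats 1000000

abbrev Q := Quaternion ℝ

instance : StarModule ℝ Q := ⟨fun r x => by ext <;> simp⟩

/-- sandwich CLM -/
def sL (a b : Q) : Q →L[ℝ] Q := a • (ContinuousLinearMap.id ℝ Q).smulRight b

lemma opsmul_eq (L : Q →L[ℝ] Q) (c : Q) : MulOpposite.op c • L = L.smulRight c := by
  ext v <;> simp [MulOpposite.smul_eq_mul_unop]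

@[simp] lemma sL_apply (a b v : Q) : sL a b v = a * v * b := by
  simp [sL, smul_eq_mul, mul_assoc]

def dp (m : ℕ) (x : Q) : Q →L[ℝ] Q := ∑ i ∈ range m, sL (x ^ i) (x ^ (m - 1 - i))

lemma dp_apply (m : ℕ) (x v : Q) :
    dp m x v = ∑ i ∈ range m, x ^ i * v * x ^ (m - 1 - i) := by
  simp [dp, ContinuousLinearMap.sum_apply]

lemma hasFDerivAt_qpow (m : ℕ) (x : Q) :
    HasFDerivAt (fun y : Q => y ^ m) (dp m x) x := by
  induction m with
  | zero => simpa [dp] using hasFDerivAt_const (1 : Q) x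
  | succ m ih =>
      have h := ih.fun_mul' (hasFDerivAt_id x)
      simp only [_root_.id] at h
      rw [opsmul_eq] at h
      have e1 : (fun y : Q => y ^ m * y) = fun y : Q => y ^ (m+1) := by
        funext y; rw [pow_succ]
      rw [e1] at h
      have e2 : dp (m+1) x = x ^ m • ContinuousLinearMap.id ℝ Q + (dp m x).smulRight x := by
        refine ContinuousLinearMap.ext fun v => ?_
        simp only [dp_apply, ContinuousLinearMap.add_apply, ContinuousLinearMap.smul_apply,
          ContinuousLinearMap.smulRight_apply, ContinuousLinearMap.coe_id', id_eq, smul_eq_mul]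
        rw [sum_range_succ]
        have hc : ∀ i ∈ range m, x ^ i * v * x ^ (m + 1 - 1 - i) = (x ^ i * v * x ^ (m - 1 - i)) * x := by
          intro i hi
          rw [mem_range] at hi
          have h3 : m + 1 - 1 - i = (m - 1 - i) + 1 := by omega
          rw [h3, pow_succ, ← mul_assoc]
        rw [sum_congr rfl hc, ← sum_mul]
        simp [mul_assoc, add_comm]
      rw [e2]
      exact h

def starCLM : Q →L[ℝ] Q := ((starL' ℝ : Q ≃L[ℝ] Q) : Q →L[ℝ] Q)

@[simp] lemma starCLM_apply (v : Q) : starCLM v = star v := rfl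

lemma hasFDerivAt_star (x : Q) : HasFDerivAt (fun y : Q => star y) starCLM x := by
  simpa [starCLM] using (hasFDerivAt_id x).star

lemma hasFDerivAt_starpow (b : ℕ) (x : Q) :
    HasFDerivAt (fun y : Q => (star y) ^ b) ((dp b (star x)).comp starCLM) x :=
  (hasFDerivAt_qpow b (star x)).comp x (hasFDerivAt_star x)

lemma hasFDerivAt_pow_mul_const (a : ℕ) (c x : Q) :
    HasFDerivAt (fun y : Q => y ^ a * c) ((dp a x).smulRight c) x := by
  have h := (hasFDerivAt_qpow a x).fun_mul' (hasFDerivAt_const c x)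
  simpa [opsmul_eq] using h

/-- derivative of `y ↦ y^a * c * y^b` -/
lemma hasFDerivAt_mono (a b : ℕ) (c x : Q) :
    HasFDerivAt (fun y : Q => y ^ a * c * y ^ b)
      ((x ^ a * c) • dp b x + (((dp a x).smulRight c).smulRight (x ^ b))) x :=
  by have h := (hasFDerivAt_pow_mul_const a c x).fun_mul' (hasFDerivAt_qpow b x)
     rwa [opsmul_eq] at h

/-- derivative of `y ↦ y^s * (star y)^b` -/
lemma hasFDerivAt_mono2 (s b : ℕ) (x : Q) :
    HasFDerivAt (fun y : Q => y ^ s * (star y) ^ b)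
      (x ^ s • ((dp b (star x)).comp starCLM) + (dp s x).smulRight ((star x) ^ b)) x :=
  by have h := (hasFDerivAt_qpow s x).fun_mul' (hasFDerivAt_starpow b x)
     rwa [opsmul_eq] at h


lemma pderiv_pow (m : ℕ) (v x : Q) :
    pderivQ v (fun y => y ^ m) x = ∑ i ∈ range m, x ^ i * v * x ^ (m - 1 - i) := by
  rw [pderivQ, (hasFDerivAt_qpow m x).fderiv, dp_apply]

lemma pderiv2_pow (m : ℕ) (v w x : Q) :
    pderivQ w (pderivQ v (fun y => y ^ m)) x
      = ∑ i ∈ range m,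
          (x ^ i * v * dp (m - 1 - i) x w + dp i x w * v * x ^ (m - 1 - i)) := by
  have h1 : pderivQ v (fun y => y ^ m) = fun x => ∑ i ∈ range m, x ^ i * v * x ^ (m - 1 - i) :=
    funext fun x => pderiv_pow m v x
  rw [h1, pderivQ]
  have h2 : HasFDerivAt (fun x : Q => ∑ i ∈ range m, x ^ i * v * x ^ (m - 1 - i))
      (∑ i ∈ range m, ((x ^ i * v) • dp (m - 1 - i) x +
        (((dp i x).smulRight v).smulRight (x ^ (m - 1 - i))))) x :=
    HasFDerivAt.fun_sum fun i _ => hasFDerivAt_mono i (m - 1 - i) v x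
  rw [h2.fderiv]
  simp [ContinuousLinearMap.sum_apply, smul_eq_mul, mul_assoc]


lemma sandA (t : Q) : t + qI * t * qI + qJ * t * qJ + qK * t * qK = (-2 : ℝ) • star t := by
  ext <;>
    simp [Quaternion.re_mul, Quaternion.imI_mul, Quaternion.imJ_mul,
      Quaternion.imK_mul] <;> simp [qI, qJ, qK] <;> ring

lemma sandB (t : Q) :
    t + qI * t * star qI + qJ * t * star qJ + qK * t * star qK = (2 : ℝ) • (t + star t) := by
  ext <;>
    simp [Quaternion.re_mul, Quaternion.imI_mul, Quaternion.imJ_mul,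
      Quaternion.imK_mul] <;> simp [qI, qJ, qK] <;> ring

lemma commxY (x : Q) : Commute x (star x) := by
  ext <;> simp [Quaternion.re_mul, Quaternion.imI_mul, Quaternion.imJ_mul,
    Quaternion.imK_mul] <;> ring

lemma Ypow_mul (x : Q) (p a b : ℕ) :
    (star x) ^ p * (x ^ a * (star x) ^ b) = x ^ a * (star x) ^ (p + b) := by
  rw [← mul_assoc, ((commxY x).symm.pow_pow p a), mul_assoc, ← pow_add]

section Combinatorics
variable {A : Type*} [AddCommMonoid A]

lemma tri (g : ℕ → A) (m : ℕ) :
    ∑ i ∈ range m, ∑ b ∈ range i, g b = ∑ b ∈ range m, (m - 1 - b) • g b := by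
  induction m with
  | zero => simp
  | succ m ih =>
      rw [sum_range_succ, ih, sum_range_succ]
      have h1 : ∀ b ∈ range m, (m + 1 - 1 - b) • g b = (m - 1 - b) • g b + g b := by
        intro b hb
        rw [mem_range] at hb
        have : m + 1 - 1 - b = (m - 1 - b) + 1 := by omega
        rw [this, succ_nsmul]
      rw [sum_congr rfl h1, sum_add_distrib]
      simp [add_assoc]

lemma swap (N : ℕ) (c : ℕ → ℕ) (g : ℕ → A) :
    ∑ b ∈ range N, c b • ∑ p ∈ range b, g p
      = ∑ p ∈ range N, (∑ b ∈ Ico (p + 1) N, c b) • g p := by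
  induction N with
  | zero => simp
  | succ N ih =>
      rw [sum_range_succ, ih, sum_range_succ, smul_sum]
      have h1 : ∀ p ∈ range N,
          (∑ b ∈ Ico (p + 1) (N + 1), c b) • g p
            = (∑ b ∈ Ico (p + 1) N, c b) • g p + c N • g p := by
        intro p hp
        rw [mem_range] at hp
        rw [Finset.sum_Ico_succ_top (by omega), add_smul]
      rw [sum_congr rfl h1, sum_add_distrib]
      simp [add_assoc]

lemma gauss (p n : ℕ) (hp : p ≤ n) :
    (p + 1) * (n - p) + ∑ b ∈ Ico (p + 1) (n + 1), (n + 1 - b)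
      = ∑ b ∈ Ico (p + 1) (n + 1), (b + 1) := by
  rw [Finset.sum_Ico_eq_sum_range, Finset.sum_Ico_eq_sum_range]
  have ht : n + 1 - (p + 1) = n - p := by omega
  rw [ht]
  set t := n - p with htdef
  have h1 : ∀ j ∈ range t, n + 1 - (p + 1 + j) = t - j := by intro j hj; omega
  have h2 : ∀ j ∈ range t, p + 1 + j + 1 = (p + 1) + (j + 1) := by intro j hj; omega
  rw [sum_congr rfl h1, sum_congr rfl h2]
  have h3 : ∑ j ∈ range t, (t - j) = ∑ j ∈ range t, (j + 1) := by
    have := Finset.sum_range_reflect (fun j => j + 1) t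
    rw [← this]
    refine sum_congr rfl fun j hj => ?_
    rw [mem_range] at hj; omega
  rw [h3, sum_add_distrib, sum_add_distrib, sum_const, sum_const, card_range, smul_eq_mul,
    smul_eq_mul, sum_add_distrib, sum_const, card_range, smul_eq_mul]
  ring

lemma key (n : ℕ) (g : ℕ → A) :
    ∑ b ∈ range (n + 1), (n + 1 - b) • (b • g (n - b) + ∑ p ∈ range b, g p)
      = ∑ b ∈ range (n + 1), (b + 1) • ∑ p ∈ range b, g p := by
  have e1 : ∀ b ∈ range (n + 1), (n + 1 - b) • (b • g (n - b) + ∑ p ∈ range b, g p)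
      = ((n + 1 - b) * b) • g (n - b) + (n + 1 - b) • ∑ p ∈ range b, g p := by
    intro b hb; rw [smul_add, mul_smul]
  rw [sum_congr rfl e1, sum_add_distrib]
  have e2 : ∑ b ∈ range (n + 1), ((n + 1 - b) * b) • g (n - b)
      = ∑ b ∈ range (n + 1), ((b + 1) * (n - b)) • g b := by
    rw [← Finset.sum_range_reflect]
    refine sum_congr rfl fun b hb => ?_
    rw [mem_range] at hb
    congr 1
    · congr 1 <;> omega
    · congr 1; omega
  rw [e2, swap, swap]
  rw [← sum_add_distrib]
  refine sum_congr rfl fun p hp => ?_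
  rw [mem_range] at hp
  rw [← add_smul, gauss p n (by omega)]
end Combinatorics

lemma sand2' (a t u : Q) :
    a * (t * u) + a * (qI * (t * (qI * u))) + a * (qJ * (t * (qJ * u)))
      + a * (qK * (t * (qK * u)))
      = (-2 : ℝ) • (a * (star t * u)) := by
  have h := congrArg (fun z : Q => a * (z * u)) (sandA t)
  simp only [add_mul, mul_add, mul_assoc, smul_mul_assoc, mul_smul_comm] at h
  rw [← h]

lemma quad_half (i r : ℕ) (x : Q) :
    x ^ i * 1 * dp r x 1 + x ^ i * qI * dp r x qI + x ^ i * qJ * dp r x qJ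
      + x ^ i * qK * dp r x qK
      = (-2 : ℝ) • ∑ p ∈ range r, x ^ i * ((star x) ^ p * x ^ (r - 1 - p)) := by
  simp only [dp_apply, mul_sum, smul_sum, mul_one, one_mul, mul_assoc]
  rw [← sum_add_distrib, ← sum_add_distrib, ← sum_add_distrib]
  refine sum_congr rfl fun p hp => ?_
  have h := sand2' (x ^ i) (x ^ p) (x ^ (r - 1 - p))
  simp only [one_mul, mul_one, mul_assoc, star_pow] at h
  rw [← h]

lemma quad_half2 (i r : ℕ) (x : Q) :
    dp i x 1 * 1 * x ^ r + dp i x qI * qI * x ^ r + dp i x qJ * qJ * x ^ r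
      + dp i x qK * qK * x ^ r
      = (-2 : ℝ) • ∑ p ∈ range i, x ^ p * ((star x) ^ (i - 1 - p) * x ^ r) := by
  simp only [dp_apply, sum_mul, smul_sum, mul_one, one_mul, mul_assoc]
  rw [← sum_add_distrib, ← sum_add_distrib, ← sum_add_distrib]
  refine sum_congr rfl fun p hp => ?_
  have h := sand2' (x ^ p) (x ^ (i - 1 - p)) (x ^ r)
  simp only [one_mul, mul_one, mul_assoc, star_pow] at h
  rw [← h]


lemma lap_pow (m : ℕ) (x : Q) :
    laplacianQ (fun y => y ^ m) x
      = (-4 : ℝ) • ∑ b ∈ range m, (m - 1 - b) • (x ^ (m - 2 - b) * (star x) ^ b) := by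
  simp only [laplacianQ]
  rw [pderiv2_pow m 1 1 x, pderiv2_pow m qI qI x, pderiv2_pow m qJ qJ x,
    pderiv2_pow m qK qK x, ← sum_add_distrib, ← sum_add_distrib, ← sum_add_distrib]
  have per_i : ∀ i ∈ range m,
      ((x ^ i * 1 * dp (m - 1 - i) x 1 + dp i x 1 * 1 * x ^ (m - 1 - i))
        + (x ^ i * qI * dp (m - 1 - i) x qI + dp i x qI * qI * x ^ (m - 1 - i))
        + (x ^ i * qJ * dp (m - 1 - i) x qJ + dp i x qJ * qJ * x ^ (m - 1 - i))
        + (x ^ i * qK * dp (m - 1 - i) x qK + dp i x qK * qK * x ^ (m - 1 - i)))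
      = (-2 : ℝ) • ∑ b ∈ range (m - 1 - i), (x ^ (m - 2 - b) * (star x) ^ b)
        + (-2 : ℝ) • ∑ b ∈ range i, (x ^ (m - 2 - b) * (star x) ^ b) := by
    intro i hi
    rw [mem_range] at hi
    have hA := quad_half i (m - 1 - i) x
    have hB := quad_half2 i (m - 1 - i) x
    have grp : ((x ^ i * 1 * dp (m - 1 - i) x 1 + dp i x 1 * 1 * x ^ (m - 1 - i))
        + (x ^ i * qI * dp (m - 1 - i) x qI + dp i x qI * qI * x ^ (m - 1 - i))
        + (x ^ i * qJ * dp (m - 1 - i) x qJ + dp i x qJ * qJ * x ^ (m - 1 - i))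
        + (x ^ i * qK * dp (m - 1 - i) x qK + dp i x qK * qK * x ^ (m - 1 - i)))
        = (x ^ i * 1 * dp (m - 1 - i) x 1 + x ^ i * qI * dp (m - 1 - i) x qI
            + x ^ i * qJ * dp (m - 1 - i) x qJ + x ^ i * qK * dp (m - 1 - i) x qK)
          + (dp i x 1 * 1 * x ^ (m - 1 - i) + dp i x qI * qI * x ^ (m - 1 - i)
            + dp i x qJ * qJ * x ^ (m - 1 - i) + dp i x qK * qK * x ^ (m - 1 - i)) := by
      abel
    rw [grp, hA, hB]
    congr 1
    · congr 1
      refine sum_congr rfl fun p hp => ?_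
      rw [mem_range] at hp
      rw [((commxY x).symm.pow_pow p (m - 1 - i - 1 - p)).eq, ← mul_assoc, ← pow_add]
      congr 2
      omega
    · congr 1
      rw [← Finset.sum_range_reflect]
      refine sum_congr rfl fun p hp => ?_
      rw [mem_range] at hp
      have e : i - 1 - (i - 1 - p) = p := by omega
      rw [e, ((commxY x).symm.pow_pow p (m - 1 - i)).eq, ← mul_assoc, ← pow_add]
      congr 2
      omega
  rw [sum_congr rfl per_i, sum_add_distrib, ← smul_sum, ← smul_sum]
  have refl1 : ∑ i ∈ range m, ∑ b ∈ range (m - 1 - i), (x ^ (m - 2 - b) * (star x) ^ b)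
      = ∑ i ∈ range m, ∑ b ∈ range i, (x ^ (m - 2 - b) * (star x) ^ b) := by
    rw [← Finset.sum_range_reflect (fun i => ∑ b ∈ range i, (x ^ (m - 2 - b) * (star x) ^ b)) m]
  rw [refl1, tri, ← add_smul]
  norm_num

lemma sand3' (t u : Q) :
    t * u + qI * (t * (qI * u)) + qJ * (t * (qJ * u)) + qK * (t * (qK * u))
      = (-2 : ℝ) • (star t * u) := by
  have h := congrArg (fun z : Q => z * u) (sandA t)
  simp only [add_mul, mul_assoc, smul_mul_assoc] at h
  rw [← h]

lemma sand4' (a c u : Q) :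
    a * (c * u) + qI * (a * (c * (star qI * u))) + qJ * (a * (c * (star qJ * u)))
      + qK * (a * (c * (star qK * u)))
      = (2 : ℝ) • (a * (c * u) + star c * (star a * u)) := by
  have h := congrArg (fun z : Q => z * u) (sandB (a * c))
  simp only [add_mul, mul_assoc, smul_mul_assoc, star_mul] at h
  rw [← h]

lemma crf_quadN (s : ℕ) (x u : Q) :
    dp s x 1 * u + qI * (dp s x qI * u) + qJ * (dp s x qJ * u) + qK * (dp s x qK * u)
      = (-2 : ℝ) • ∑ p ∈ range s, (star x) ^ p * (x ^ (s - 1 - p) * u) := by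
  simp only [dp_apply, sum_mul, mul_sum, smul_sum, one_mul, mul_one, mul_assoc]
  rw [← sum_add_distrib, ← sum_add_distrib, ← sum_add_distrib]
  refine sum_congr rfl fun p hp => ?_
  have h := sand3' (x ^ p) (x ^ (s - 1 - p) * u)
  simp only [one_mul, mul_one, mul_assoc, star_pow] at h
  rw [← h]

lemma crf_quadP (b : ℕ) (a w : Q) :
    a * dp b w 1 + qI * (a * dp b w (star qI)) + qJ * (a * dp b w (star qJ))
      + qK * (a * dp b w (star qK))
      = (2 : ℝ) • ∑ p ∈ range b,
          (a * (w ^ p * w ^ (b - 1 - p)) + star (w ^ p) * (star a * w ^ (b - 1 - p))) := by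
  simp only [dp_apply, mul_sum, smul_sum, one_mul, mul_one, mul_assoc]
  rw [← sum_add_distrib, ← sum_add_distrib, ← sum_add_distrib]
  refine sum_congr rfl fun p hp => ?_
  have h := sand4' a (w ^ p) (w ^ (b - 1 - p))
  rw [← h]


lemma pderiv_G (M : ℕ) (E : ℕ → ℕ) (c : ℕ → ℝ) (v x : Q) :
    pderivQ v (fun y => ∑ b ∈ range M, c b • (y ^ E b * (star y) ^ b)) x
      = ∑ b ∈ range M, c b •
          (x ^ E b * dp b (star x) (star v) + dp (E b) x v * (star x) ^ b) := by
  have h : HasFDerivAt (fun y : Q => ∑ b ∈ range M, c b • (y ^ E b * (star y) ^ b))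
      (∑ b ∈ range M, c b • (x ^ E b • ((dp b (star x)).comp starCLM)
        + (dp (E b) x).smulRight ((star x) ^ b))) x :=
    HasFDerivAt.fun_sum fun b _ => (hasFDerivAt_mono2 (E b) b x).const_smul (c b)
  rw [pderivQ, h.fderiv]
  simp only [ContinuousLinearMap.sum_apply, ContinuousLinearMap.smul_apply,
    ContinuousLinearMap.add_apply, ContinuousLinearMap.coe_comp', Function.comp_apply,
    ContinuousLinearMap.smulRight_apply, starCLM_apply, smul_eq_mul]

lemma crf_term (s b : ℕ) (x : Q) :
    x ^ s * dp b (star x) (star (1 : Q)) + dp s x 1 * (star x) ^ b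
      + qI * (x ^ s * dp b (star x) (star qI) + dp s x qI * (star x) ^ b)
      + qJ * (x ^ s * dp b (star x) (star qJ) + dp s x qJ * (star x) ^ b)
      + qK * (x ^ s * dp b (star x) (star qK) + dp s x qK * (star x) ^ b)
    = (2 : ℝ) • ∑ p ∈ range b,
          (x ^ s * ((star x) ^ p * (star x) ^ (b - 1 - p))
            + x ^ p * ((star x) ^ s * (star x) ^ (b - 1 - p)))
      + (-2 : ℝ) • ∑ p ∈ range s, (star x) ^ p * (x ^ (s - 1 - p) * (star x) ^ b) := by
  have hN := crf_quadN s x ((star x) ^ b)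
  have hP := crf_quadP b (x ^ s) (star x)
  simp only [star_pow, star_star] at hP
  have grp : x ^ s * dp b (star x) (star (1 : Q)) + dp s x 1 * (star x) ^ b
      + qI * (x ^ s * dp b (star x) (star qI) + dp s x qI * (star x) ^ b)
      + qJ * (x ^ s * dp b (star x) (star qJ) + dp s x qJ * (star x) ^ b)
      + qK * (x ^ s * dp b (star x) (star qK) + dp s x qK * (star x) ^ b)
      = (x ^ s * dp b (star x) 1 + qI * (x ^ s * dp b (star x) (star qI))
          + qJ * (x ^ s * dp b (star x) (star qJ)) + qK * (x ^ s * dp b (star x) (star qK)))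
        + (dp s x 1 * (star x) ^ b + qI * (dp s x qI * (star x) ^ b)
          + qJ * (dp s x qJ * (star x) ^ b) + qK * (dp s x qK * (star x) ^ b)) := by
    simp only [star_one, mul_add]
    abel
  rw [grp, hP, hN]

lemma Kb_eq (n b : ℕ) (hb : b ≤ n) (x : Q) :
    (2 : ℝ) • ∑ p ∈ range b,
          (x ^ (n - b) * ((star x) ^ p * (star x) ^ (b - 1 - p))
            + x ^ p * ((star x) ^ (n - b) * (star x) ^ (b - 1 - p)))
      + (-2 : ℝ) • ∑ p ∈ range (n - b), (star x) ^ p * (x ^ (n - b - 1 - p) * (star x) ^ b)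
    = (2 : ℝ) • (b • (x ^ (n - b) * (star x) ^ (n - 1 - (n - b)))
        + ∑ p ∈ range b, (x ^ p * (star x) ^ (n - 1 - p)))
      + (-2 : ℝ) • ∑ p ∈ range (n - b), (x ^ p * (star x) ^ (n - 1 - p)) := by
  congr 1
  · congr 1
    have e1 : ∀ p ∈ range b,
        (x ^ (n - b) * ((star x) ^ p * (star x) ^ (b - 1 - p))
          + x ^ p * ((star x) ^ (n - b) * (star x) ^ (b - 1 - p)))
        = (x ^ (n - b) * (star x) ^ (n - 1 - (n - b)) + x ^ p * (star x) ^ (n - 1 - p)) := by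
      intro p hp
      rw [mem_range] at hp
      rw [← pow_add, ← pow_add]
      congr 3 <;> omega
    rw [sum_congr rfl e1, sum_add_distrib, sum_const, card_range]
  · congr 1
    rw [← Finset.sum_range_reflect]
    refine sum_congr rfl fun p hp => ?_
    rw [mem_range] at hp
    have e2 : n - b - 1 - (n - b - 1 - p) = p := by omega
    rw [e2, ← mul_assoc, ((commxY x).symm.pow_pow (n - b - 1 - p) p).eq, mul_assoc, ← pow_add]
    congr 2
    omega

lemma reflF {A : Type*} [AddCommMonoid A] (n : ℕ) (g : ℕ → A) :
    ∑ b ∈ range (n + 1), (n + 1 - b) • (∑ p ∈ range (n - b), g p)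
      = ∑ b ∈ range (n + 1), (b + 1) • ∑ p ∈ range b, g p := by
  rw [← Finset.sum_range_reflect (fun b => (b + 1) • ∑ p ∈ range b, g p) (n + 1)]
  refine sum_congr rfl fun b hb => ?_
  rw [mem_range] at hb
  have e1 : n + 1 - 1 - b = n - b := by omega
  rw [e1]
  congr 1
  omega

lemma lap_pow' (m : ℕ) :
    laplacianQ (fun y => y ^ m)
      = fun x => ∑ b ∈ range m,
          ((-4 : ℝ) * ((m - 1 - b : ℕ) : ℝ)) • (x ^ (m - 2 - b) * (star x) ^ b) := by
  funext x
  rw [lap_pow, smul_sum]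
  refine sum_congr rfl fun b _ => ?_
  rw [← Nat.cast_smul_eq_nsmul ℝ, smul_smul]

/-- Fueter's theorem for monomials: for `m ≥ 2`, `Δ(x^m)` satisfies the
Cauchy–Riemann–Fueter equation on all of `ℍ`. -/
theorem fueter_for_powers (m : ℕ) (hm : 2 ≤ m) :
    ∀ x : Quaternion ℝ, CRFbar (laplacianQ (fun y => y ^ m)) x = 0 := by
  obtain ⟨n, rfl⟩ : ∃ n, m = n + 2 := ⟨m - 2, by omega⟩
  intro x
  rw [lap_pow' (n + 2)]
  simp only [CRFbar]
  rw [pderiv_G (n + 2) (fun b => n + 2 - 2 - b) (fun b => (-4 : ℝ) * ((n + 2 - 1 - b : ℕ) : ℝ)) 1 x,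
    pderiv_G (n + 2) (fun b => n + 2 - 2 - b) (fun b => (-4 : ℝ) * ((n + 2 - 1 - b : ℕ) : ℝ)) qI x,
    pderiv_G (n + 2) (fun b => n + 2 - 2 - b) (fun b => (-4 : ℝ) * ((n + 2 - 1 - b : ℕ) : ℝ)) qJ x,
    pderiv_G (n + 2) (fun b => n + 2 - 2 - b) (fun b => (-4 : ℝ) * ((n + 2 - 1 - b : ℕ) : ℝ)) qK x]
  have eE : ∀ b : ℕ, n + 2 - 2 - b = n - b := fun b => by omega
  have eC : ∀ b : ℕ, n + 2 - 1 - b = n + 1 - b := fun b => by omega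
  simp only [eE, eC, mul_sum, mul_smul_comm]
  rw [← sum_add_distrib, ← sum_add_distrib, ← sum_add_distrib, sum_range_succ]
  simp only [Nat.sub_self, Nat.cast_zero, mul_zero, zero_smul, add_zero, zero_add]
  have per_b : ∀ b ∈ range (n + 1),
      ((-4 : ℝ) * ((n + 1 - b : ℕ) : ℝ)) •
          (x ^ (n - b) * dp b (star x) (star (1 : Q)) + dp (n - b) x 1 * (star x) ^ b)
        + ((-4 : ℝ) * ((n + 1 - b : ℕ) : ℝ)) •
          (qI * (x ^ (n - b) * dp b (star x) (star qI) + dp (n - b) x qI * (star x) ^ b))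
        + ((-4 : ℝ) * ((n + 1 - b : ℕ) : ℝ)) •
          (qJ * (x ^ (n - b) * dp b (star x) (star qJ) + dp (n - b) x qJ * (star x) ^ b))
        + ((-4 : ℝ) * ((n + 1 - b : ℕ) : ℝ)) •
          (qK * (x ^ (n - b) * dp b (star x) (star qK) + dp (n - b) x qK * (star x) ^ b))
      = (-8 : ℝ) • ((n + 1 - b) •
            (b • (x ^ (n - b) * (star x) ^ (n - 1 - (n - b)))
              + ∑ p ∈ range b, x ^ p * (star x) ^ (n - 1 - p)))
        + (8 : ℝ) • ((n + 1 - b) • ∑ p ∈ range (n - b), x ^ p * (star x) ^ (n - 1 - p)) := by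
    intro b hb
    rw [mem_range] at hb
    rw [← smul_add, ← smul_add, ← smul_add, crf_term (n - b) b x, Kb_eq n b (by omega) x]
    rw [← Nat.cast_smul_eq_nsmul ℝ ((n:ℕ) + 1 - b), ← Nat.cast_smul_eq_nsmul ℝ ((n:ℕ) + 1 - b),
      ← Nat.cast_smul_eq_nsmul ℝ b]
    module
  rw [sum_congr rfl per_b, sum_add_distrib, ← smul_sum, ← smul_sum,
    key n (fun p => x ^ p * (star x) ^ (n - 1 - p)),
    reflF n (fun p => x ^ p * (star x) ^ (n - 1 - p)), ← add_smul]
  norm_num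

end
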